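/- arXiv:2211.16168 — 2 statements merged into one kernel-verified Lean document; each statement's English description precedes it below -/
import Mathlib

section
/- Let λ, μ, kp, ks, k̃p, k̃s be complex numbers and define A2 = (1/4)·[[2μ(k̃p^2 + ks^2 + k̃s^2) - 3kp^2(λ+2μ), (3kp^2(λ+2μ) + 2μ(k̃p^2 - ks^2 + k̃s^2))·i],[μ(2kp^2 - 2k̃p^2 - 3ks^2 - 2k̃s^2)·i, μ(2kp^2 + 2k̃p^2 - 3ks^2 + 2k̃s^2)]]. Then A2·(i,1)^T = μ(k̃p^2 + k̃s^2)·(i,1)^T and consequently det A2 = -(1/4)·μ·(k̃p^2 + k̃s^2)·(kp^2(3λ+4μ) + ks^2 μ). -/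
open Matrix Complex

theorem Matrix.det_fin_two_eq_mul_trace_sub_of_mulVec_eq_smul {K : Type*} [Field K]
    (A : Matrix (Fin 2) (Fin 2) K) {v : Fin 2 → K} (hv : v ≠ 0) {c : K}
    (hAv : A *ᵥ v = c • v) : A.det = c * (A.trace - c) := by
  have hsingular : (A - c • (1 : Matrix (Fin 2) (Fin 2) K)).det = 0 :=
    exists_mulVec_eq_zero_iff.mp
      ⟨v, hv, by rw [sub_mulVec, hAv, smul_mulVec, one_mulVec, sub_self]⟩
  rw [det_fin_two] at hsingular
  simp only [sub_apply, smul_apply, one_apply, Fin.isValue, Fin.reduceEq, if_true, if_false,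
    smul_eq_mul, mul_one, mul_zero, sub_zero] at hsingular
  rw [det_fin_two, trace_fin_two]
  linear_combination hsingular

/-- The principal symbol `A₂` of the regularized Neumann operator satisfies
`A₂ (i,1)ᵀ = μ(k̃p²+k̃s²) (i,1)ᵀ` and
`det A₂ = -(1/4) μ (k̃p²+k̃s²)(kp²(3λ+4μ) + ks² μ)`. -/
theorem stmt_11 (lam mu kp ks kp' ks' : ℂ) :
    let A2 : Matrix (Fin 2) (Fin 2) ℂ :=
      (1 / 4 : ℂ) •
        !![2 * mu * (kp' ^ 2 + ks ^ 2 + ks' ^ 2) - 3 * kp ^ 2 * (lam + 2 * mu),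
           (3 * kp ^ 2 * (lam + 2 * mu) + 2 * mu * (kp' ^ 2 - ks ^ 2 + ks' ^ 2)) * I;
           mu * (2 * kp ^ 2 - 2 * kp' ^ 2 - 3 * ks ^ 2 - 2 * ks' ^ 2) * I,
           mu * (2 * kp ^ 2 + 2 * kp' ^ 2 - 3 * ks ^ 2 + 2 * ks' ^ 2)]
    A2.mulVec ![I, 1] = (mu * (kp' ^ 2 + ks' ^ 2)) • ![I, 1] ∧
    A2.det = -(1 / 4) * mu * (kp' ^ 2 + ks' ^ 2) *
      (kp ^ 2 * (3 * lam + 4 * mu) + ks ^ 2 * mu) := by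
  intro A2
  have heigen : A2 *ᵥ ![I, 1] = (mu * (kp' ^ 2 + ks' ^ 2)) • ![I, 1] := by
    rw [smul_mulVec, mulVec_fin_two, smul_vec2, smul_vec2]
    refine vec2_eq ?_ ?_
    · simp only [of_apply, cons_val_zero, cons_val_one]
      ring
    · simp only [of_apply, cons_val_zero, cons_val_one]
      linear_combination
        (1 / 4 * mu * (2 * kp ^ 2 - 2 * kp' ^ 2 - 3 * ks ^ 2 - 2 * ks' ^ 2)) * I_sq
  have hv : (![I, 1] : Fin 2 → ℂ) ≠ 0 := fun h => one_ne_zero (congrFun h 1)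
  refine ⟨heigen, ?_⟩
  rw [det_fin_two_eq_mul_trace_sub_of_mulVec_eq_smul A2 hv heigen, trace_smul,
    trace_fin_two_of, smul_eq_mul]
  ring
end

section
/- Let μ, λ, kp, ks, k̃p, k̃s be complex numbers with μ(k̃p^2 - 2ks^2 + k̃s^2) ≠ 0, and define A = (1/(4μ(k̃p^2 - 2ks^2 + k̃s^2)))·[[2μ(-3k̃p^2 + 3ks^2 + k̃s^2) - 3kp^2(λ+2μ), (3kp^2(λ+2μ) + 2μ(k̃p^2 + ks^2 - 3k̃s^2))·i],[μ(2kp^2 + 6k̃p^2 - 7ks^2 - 2k̃s^2)·i, μ(2kp^2 + 2k̃p^2 + ks^2 - 6k̃s^2)]]. Then A·(i,1)^T = -(i,1)^T and det A = -(1 + Tr A) = (kp^2(3λ+4μ) + ks^2 μ)/(4μ(k̃p^2 - 2ks^2 + k̃s^2)). -/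
open Matrix Complex

/-!
Since `(i, 1)` is an eigenvector of `A` for the eigenvalue `-1`, the characteristic polynomial
`X² - (tr A) X + det A` vanishes at `-1`, i.e. `det A = -(1 + tr A)`. The closed form of `det A`
then follows from that of the trace, which is linear in the entries.
-/

theorem Matrix.det_fin_two_eq_of_mulVec_eq_smul {R : Type*} [CommRing R] [IsDomain R]
    {A : Matrix (Fin 2) (Fin 2) R} {v : Fin 2 → R} {c : R} (hv : v ≠ 0) (h : A *ᵥ v = c • v) :
    A.det = c * A.trace - c ^ 2 := by
  have hsing : (A - c • (1 : Matrix (Fin 2) (Fin 2) R)).det = 0 := by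
    refine Matrix.exists_mulVec_eq_zero_iff.mp ⟨v, hv, ?_⟩
    rw [sub_mulVec, smul_mulVec, one_mulVec, h, sub_self]
  rw [det_fin_two, trace_fin_two]
  simp only [det_fin_two, sub_apply, smul_apply, one_apply_eq, one_apply_ne zero_ne_one,
    one_apply_ne one_ne_zero, smul_eq_mul, mul_one, mul_zero, sub_zero] at hsing
  linear_combination hsing

/-- The principal symbol `A` of the regularized Neumann operator `B^comb ∘ R_N`
satisfies `A (i,1)ᵀ = -(i,1)ᵀ` and
`det A = -(1 + Tr A) = (kp²(3λ+4μ) + ks² μ)/(4μ(k̃p² - 2ks² + k̃s²))`. -/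
theorem stmt_12 (lam mu kp ks kp' ks' : ℂ)
    (hd : mu * (kp' ^ 2 - 2 * ks ^ 2 + ks' ^ 2) ≠ 0) :
    let A : Matrix (Fin 2) (Fin 2) ℂ :=
      (1 / (4 * mu * (kp' ^ 2 - 2 * ks ^ 2 + ks' ^ 2))) •
        !![2 * mu * (-3 * kp' ^ 2 + 3 * ks ^ 2 + ks' ^ 2) - 3 * kp ^ 2 * (lam + 2 * mu),
           (3 * kp ^ 2 * (lam + 2 * mu) + 2 * mu * (kp' ^ 2 + ks ^ 2 - 3 * ks' ^ 2)) * I;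
           mu * (2 * kp ^ 2 + 6 * kp' ^ 2 - 7 * ks ^ 2 - 2 * ks' ^ 2) * I,
           mu * (2 * kp ^ 2 + 2 * kp' ^ 2 + ks ^ 2 - 6 * ks' ^ 2)]
    A.mulVec ![I, 1] = -![I, 1] ∧
    A.det = -(1 + A.trace) ∧
    A.det = (kp ^ 2 * (3 * lam + 4 * mu) + ks ^ 2 * mu) /
      (4 * mu * (kp' ^ 2 - 2 * ks ^ 2 + ks' ^ 2)) := by
  intro A
  obtain ⟨hmu, hD⟩ := mul_ne_zero_iff.mp hd
  have heig : A *ᵥ ![I, 1] = -![I, 1] := by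
    simp only [A, smul_mulVec, cons_mulVec, cons_dotProduct_cons, dotProduct_of_isEmpty,
      empty_mulVec, smul_cons, smul_empty, neg_cons, neg_empty, smul_eq_mul, vecCons_inj, mul_one,
      add_zero, and_true]
    constructor <;> field_simp
    · ring
    · linear_combination (2 * kp ^ 2 + 6 * kp' ^ 2 - 7 * ks ^ 2 - 2 * ks' ^ 2) * I_sq
  have hdet : A.det = -(1 + A.trace) := by
    have hv : ![I, 1] ≠ 0 := fun h => one_ne_zero (congrFun h 1)
    rw [det_fin_two_eq_of_mulVec_eq_smul hv (c := -1) (by rw [heig, neg_one_smul])]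
    ring
  refine ⟨heig, hdet, ?_⟩
  rw [hdet]
  simp only [A, trace_smul, trace_fin_two_of, smul_eq_mul]
  field_simp
  ring
end
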